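/- arXiv:2404.10797 — 3 statements merged into one kernel-verified Lean document; each statement's English description precedes it below -/
import Mathlib

section
/- Let Ω be a topological space, let K be a convex subset of C(Ω) such that K + c ⊂ K for every constant c, and let f ∈ C(Ω). For ω ∈ Ω and x ∈ C(Ω) define h_ω(x) = inf{ (f−y)(ω) : y ∈ K, f−y ≥ x }, assuming the set over which the infimum is taken is nonempty for every x. Then for every ω ∈ Ω the function x ↦ h_ω(x) is convex and 1-Lipschitz with respect to the supremum norm on C(Ω). -/
open BoundedContinuousFunction

/-- The function `h_ω(x) = inf{(f-y)(ω) : y ∈ K, f-y ≥ x}` is convex and 1-Lipschitz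
in `x` (with respect to the supremum norm), for every `ω`. -/
theorem stmt_6
    {Ω : Type*} [TopologicalSpace Ω]
    (K : Set (Ω →ᵇ ℝ)) (hKconv : Convex ℝ K)
    (hKaddconst : ∀ g ∈ K, ∀ c : ℝ, g + BoundedContinuousFunction.const Ω c ∈ K)
    (f : Ω →ᵇ ℝ)
    (hnonempty : ∀ x : Ω →ᵇ ℝ, ∃ y ∈ K, ∀ t : Ω, x t ≤ f t - y t)
    (h : Ω → (Ω →ᵇ ℝ) → ℝ)
    (hdef : ∀ ω x, h ω x =
      sInf {r : ℝ | ∃ y ∈ K, (∀ t : Ω, x t ≤ f t - y t) ∧ r = f ω - y ω}) :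
    ∀ ω : Ω, ConvexOn ℝ Set.univ (h ω) ∧ LipschitzWith 1 (h ω) := by
  intro ω
  set S : (Ω →ᵇ ℝ) → Set ℝ :=
    fun x => {r : ℝ | ∃ y ∈ K, (∀ t : Ω, x t ≤ f t - y t) ∧ r = f ω - y ω} with hS
  have hd : ∀ x, h ω x = sInf (S x) := fun x => hdef ω x
  have hSne : ∀ x, (S x).Nonempty := by
    intro x
    obtain ⟨y, hy, hle⟩ := hnonempty x
    exact ⟨f ω - y ω, y, hy, hle, rfl⟩
  have hSbdd : ∀ x, BddBelow (S x) := by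
    intro x
    refine ⟨x ω, ?_⟩
    rintro r ⟨y, hy, hle, rfl⟩
    have := hle ω
    linarith
  have key : ∀ x x' : Ω →ᵇ ℝ, h ω x ≤ h ω x' + dist x x' := by
    intro x x'
    rw [hd, hd]
    have hsub : sInf (S x) - dist x x' ≤ sInf (S x') := by
      refine le_csInf (hSne x') ?_
      rintro r ⟨y, hy, hle, rfl⟩
      have hmem : (f ω - y ω) + dist x x' ∈ S x := by
        refine ⟨y + BoundedContinuousFunction.const Ω (-(dist x x')), hKaddconst y hy _, ?_, ?_⟩
        · intro t
          simp only [BoundedContinuousFunction.coe_add, Pi.add_apply,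
            BoundedContinuousFunction.const_apply]
          have h1 : dist (x t) (x' t) ≤ dist x x' :=
            BoundedContinuousFunction.dist_coe_le_dist t
          rw [Real.dist_eq] at h1
          have h2 := abs_le.mp h1
          have := hle t
          linarith [h2.2]
        · simp only [BoundedContinuousFunction.coe_add, Pi.add_apply,
            BoundedContinuousFunction.const_apply]
          ring
      have := csInf_le (hSbdd x) hmem
      linarith
    linarith
  constructor
  · refine ⟨convex_univ, ?_⟩
    intro x₁ _ x₂ _ a b ha hb hab
    have keyc : ∀ r₁ ∈ S x₁, ∀ r₂ ∈ S x₂, h ω (a • x₁ + b • x₂) ≤ a * r₁ + b * r₂ := by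
      rintro r₁ ⟨y₁, hy₁, hle₁, rfl⟩ r₂ ⟨y₂, hy₂, hle₂, rfl⟩
      rw [hd]
      have hmem : a * (f ω - y₁ ω) + b * (f ω - y₂ ω) ∈ S (a • x₁ + b • x₂) := by
        refine ⟨a • y₁ + b • y₂, hKconv hy₁ hy₂ ha hb hab, ?_, ?_⟩
        · intro t
          simp only [BoundedContinuousFunction.coe_add, BoundedContinuousFunction.coe_smul,
            Pi.add_apply, Pi.smul_apply, smul_eq_mul]
          have h1 := mul_le_mul_of_nonneg_left (hle₁ t) ha
          have h2 := mul_le_mul_of_nonneg_left (hle₂ t) hb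
          have hf : a * f t + b * f t = f t := by rw [← add_mul, hab, one_mul]
          linarith
        · simp only [BoundedContinuousFunction.coe_add, BoundedContinuousFunction.coe_smul,
            Pi.add_apply, Pi.smul_apply, smul_eq_mul]
          have hf : a * f ω + b * f ω = f ω := by rw [← add_mul, hab, one_mul]
          linarith
      exact csInf_le (hSbdd _) hmem
    rw [hd x₁, hd x₂]
    simp only [smul_eq_mul]
    refine le_of_forall_pos_le_add (fun ε hε => ?_)
    obtain ⟨r₁, hr₁, hlt₁⟩ := Real.lt_sInf_add_pos (hSne x₁) (half_pos hε)
    obtain ⟨r₂, hr₂, hlt₂⟩ := Real.lt_sInf_add_pos (hSne x₂) (half_pos hε)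
    have hk := keyc r₁ hr₁ r₂ hr₂
    have ha1 : a ≤ 1 := by linarith
    have hb1 : b ≤ 1 := by linarith
    nlinarith [mul_le_mul_of_nonneg_left hlt₁.le ha, mul_le_mul_of_nonneg_left hlt₂.le hb,
      mul_le_mul_of_nonneg_right ha1 (le_of_lt (half_pos hε)),
      mul_le_mul_of_nonneg_right hb1 (le_of_lt (half_pos hε))]
  · refine LipschitzWith.of_dist_le_mul (fun x x' => ?_)
    rw [NNReal.coe_one, one_mul, Real.dist_eq, abs_le]
    have h1 := key x x'
    have h2 := key x' x
    rw [dist_comm x' x] at h2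
    constructor <;> linarith
end

section
/- Let Ω be a Polish space, let K be a convex subset of C(Ω) that is stable under pointwise maxima, contains all constant functions, and satisfies K + c ⊂ K for every constant c, and let f ∈ C(Ω). For ω ∈ Ω and x ∈ C(Ω) define h_ω(x) = inf{ (f−y)(ω) : y ∈ K, f−y ≥ x }. Suppose μ, ν are Borel probability measures on Ω with ∫_Ω g d(μ−ν) ≤ ∫_Ω f d(μ−ν) for all g ∈ K. Then for every x ∈ C(Ω), ∫_Ω x dν ≤ ∫_Ω h_ω(x) dμ(ω). -/
open MeasureTheory BoundedContinuousFunction Filter Topology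

/-- If `∫ g d(μ-ν) ≤ ∫ f d(μ-ν)` for all `g ∈ K`, then for every `x ∈ C(Ω)` one has
`∫ x dν ≤ ∫ h_ω(x) dμ(ω)`, where `h_ω(x) = inf{(f-y)(ω) : y ∈ K, f-y ≥ x}`. -/
theorem stmt_10
    {Ω : Type*} [TopologicalSpace Ω] [PolishSpace Ω]
    [MeasurableSpace Ω] [BorelSpace Ω]
    (K : Set (Ω →ᵇ ℝ)) (hKconv : Convex ℝ K)
    (hKmax : ∀ g₁ ∈ K, ∀ g₂ ∈ K, g₁ ⊔ g₂ ∈ K)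
    (hKconst : ∀ c : ℝ, BoundedContinuousFunction.const Ω c ∈ K)
    (hKaddconst : ∀ g ∈ K, ∀ c : ℝ, g + BoundedContinuousFunction.const Ω c ∈ K)
    (f : Ω →ᵇ ℝ)
    (h : Ω → (Ω →ᵇ ℝ) → ℝ)
    (hdef : ∀ ω x, h ω x =
      sInf {r : ℝ | ∃ y ∈ K, (∀ t : Ω, x t ≤ f t - y t) ∧ r = f ω - y ω})
    (μ ν : Measure Ω) [IsProbabilityMeasure μ] [IsProbabilityMeasure ν]
    (hmaj : ∀ g ∈ K,
      (∫ t, g t ∂μ) - (∫ t, g t ∂ν) ≤ (∫ t, f t ∂μ) - (∫ t, f t ∂ν)) :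
    ∀ x : Ω →ᵇ ℝ, ∫ t, x t ∂ν ≤ ∫ ω, h ω x ∂μ := by
  intro x
  classical
  set c : ℝ := -(‖f‖ + ‖x‖) with hc
  set I : Set (Ω →ᵇ ℝ) := {y | y ∈ K ∧ ∀ t, x t ≤ f t - y t} with hIdef
  have hy₀I : BoundedContinuousFunction.const Ω c ∈ I := by
    refine ⟨hKconst c, fun t => ?_⟩
    have h1 : |x t| ≤ ‖x‖ := by
      simpa [Real.norm_eq_abs] using x.norm_coe_le_norm t
    have h2 : |f t| ≤ ‖f‖ := by
      simpa [Real.norm_eq_abs] using f.norm_coe_le_norm t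
    have h1' := (abs_le.mp h1).2
    have h2' := (abs_le.mp h2).1
    simp only [BoundedContinuousFunction.const_apply, hc]
    linarith
  -- the defining set of the infimum
  set A : Ω → Set ℝ := fun t =>
    {r : ℝ | ∃ y ∈ K, (∀ s : Ω, x s ≤ f s - y s) ∧ r = f t - y t} with hAdef
  have hmemA : ∀ t, ∀ y ∈ I, f t - y t ∈ A t := by
    intro t y hy
    exact ⟨y, hy.1, hy.2, rfl⟩
  have hbddA : ∀ t, BddBelow (A t) := by
    intro t
    refine ⟨x t, ?_⟩
    rintro r ⟨y, hyK, hxy, rfl⟩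
    exact hxy t
  -- Lindelöf: countable inf-dense subfamily, rational level sets
  have lind : ∀ q : ℚ, ∃ T : Set ↥I, T.Countable ∧
      ∀ t : Ω, (∃ y : ↥I, f t - (y : Ω →ᵇ ℝ) t < q) →
        ∃ y ∈ T, f t - (y : Ω →ᵇ ℝ) t < q := by
    intro q
    obtain ⟨T, hTc, hTu⟩ := TopologicalSpace.isOpen_iUnion_countable
      (fun y : ↥I => {t | f t - (y : Ω →ᵇ ℝ) t < (q : ℝ)})
      (fun y => isOpen_lt (f.continuous.sub (y : Ω →ᵇ ℝ).continuous) continuous_const)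
    refine ⟨T, hTc, ?_⟩
    rintro t ⟨y, hy⟩
    have ht : t ∈ ⋃ i : ↥I, {t | f t - (i : Ω →ᵇ ℝ) t < (q : ℝ)} :=
      Set.mem_iUnion.mpr ⟨y, hy⟩
    rw [← hTu] at ht
    simpa using ht
  choose T hTc hT using lind
  set S : Set ↥I := insert ⟨_, hy₀I⟩ (⋃ q : ℚ, T q) with hSdef
  have hScnt : S.Countable := ((Set.countable_iUnion fun q => hTc q).insert _)
  have hSne : S.Nonempty := ⟨_, Set.mem_insert _ _⟩
  obtain ⟨e, he⟩ := Set.Countable.exists_eq_range hScnt hSne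
  -- build a decreasing sequence
  set z : ℕ → (Ω →ᵇ ℝ) := fun n => Nat.rec ((e 0 : ↥I) : Ω →ᵇ ℝ)
    (fun k zk => zk ⊔ ((e (k+1) : ↥I) : Ω →ᵇ ℝ)) n with hzdef
  have hz0 : z 0 = ((e 0 : ↥I) : Ω →ᵇ ℝ) := rfl
  have hzs : ∀ n, z (n+1) = z n ⊔ ((e (n+1) : ↥I) : Ω →ᵇ ℝ) := fun n => rfl
  have hzI : ∀ n, z n ∈ I := by
    intro n
    induction n with
    | zero => exact (e 0).2
    | succ k ih =>
      rw [hzs k]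
      refine ⟨hKmax _ ih.1 _ (e (k+1)).2.1, fun t => ?_⟩
      have h1 := ih.2 t
      have h2 := (e (k+1)).2.2 t
      simp only [BoundedContinuousFunction.coe_sup, Pi.sup_apply]
      rcases le_total (z k t) (((e (k+1) : ↥I) : Ω →ᵇ ℝ) t) with hle | hle
      · rw [max_eq_right hle]; linarith
      · rw [max_eq_left hle]; linarith
  have hek : ∀ k t, ((e k : ↥I) : Ω →ᵇ ℝ) t ≤ z k t := by
    intro k t
    cases k with
    | zero => exact le_refl _
    | succ m =>
      rw [hzs m]
      simp [BoundedContinuousFunction.coe_sup, Pi.sup_apply]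
  have hzmono : ∀ n t, z n t ≤ z (n+1) t := by
    intro n t
    rw [hzs n]
    simp [BoundedContinuousFunction.coe_sup, Pi.sup_apply]
  have hFanti : ∀ t, Antitone (fun n => f t - z n t) := by
    intro t
    refine antitone_nat_of_succ_le fun n => ?_
    have := hzmono n t
    linarith
  have hxF : ∀ n t, x t ≤ f t - z n t := fun n t => (hzI n).2 t
  -- pointwise convergence to h
  have hlim : ∀ t, Tendsto (fun n => f t - z n t) atTop (nhds (h t x)) := by
    intro t
    have hbdd : BddBelow (Set.range fun n => f t - z n t) := by
      refine ⟨x t, ?_⟩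
      rintro r ⟨n, rfl⟩
      exact hxF n t
    have htend := tendsto_atTop_ciInf (hFanti t) hbdd
    have heq : (⨅ n, f t - z n t) = h t x := by
      rw [hdef t x]
      apply le_antisymm
      · -- ⨅ ≤ sInf (A t) : iInf is a lower bound of A t
        refine le_csInf ⟨f t - (BoundedContinuousFunction.const Ω c) t,
          hmemA t _ hy₀I⟩ ?_
        rintro r ⟨y, hyK, hxy, rfl⟩
        by_contra hcon
        push_neg at hcon
        obtain ⟨q, hq1, hq2⟩ := exists_rat_btwn hcon
        obtain ⟨y', hy'T, hy'⟩ := hT q t ⟨⟨y, hyK, hxy⟩, hq1⟩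
        have hy'S : y' ∈ S := Set.mem_insert_iff.mpr (Or.inr (Set.mem_iUnion.mpr ⟨q, hy'T⟩))
        rw [he] at hy'S
        obtain ⟨k, rfl⟩ := hy'S
        have h1 : (⨅ n, f t - z n t) ≤ f t - z k t := ciInf_le hbdd k
        have h2 : f t - z k t ≤ f t - ((e k : ↥I) : Ω →ᵇ ℝ) t := by
          have := hek k t; linarith
        linarith
      · -- sInf (A t) ≤ ⨅
        refine le_ciInf fun n => csInf_le (hbddA t) (hmemA t _ (hzI n))
    rwa [heq] at htend
  -- dominated convergence
  set C : ℝ := max ‖x‖ (‖f‖ + ‖z 0‖) with hC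
  have hbound : ∀ n t, |f t - z n t| ≤ C := by
    intro n t
    have hub : f t - z n t ≤ f t - z 0 t := hFanti t (Nat.zero_le n)
    have h1 : |f t| ≤ ‖f‖ := by simpa [Real.norm_eq_abs] using f.norm_coe_le_norm t
    have h2 : |z 0 t| ≤ ‖z 0‖ := by simpa [Real.norm_eq_abs] using (z 0).norm_coe_le_norm t
    have h3 : |x t| ≤ ‖x‖ := by simpa [Real.norm_eq_abs] using x.norm_coe_le_norm t
    have hlb : x t ≤ f t - z n t := hxF n t
    rw [abs_le]
    constructor
    · have := (abs_le.mp h3).1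
      have : -‖x‖ ≤ x t := this
      have hCx : ‖x‖ ≤ C := le_max_left _ _
      linarith
    · have := (abs_le.mp h1).2
      have h2' := (abs_le.mp h2).1
      have hCf : ‖f‖ + ‖z 0‖ ≤ C := le_max_right _ _
      linarith
  have hmeas : ∀ n, AEStronglyMeasurable (fun t => f t - z n t) μ :=
    fun n => (f.continuous.sub (z n).continuous).aestronglyMeasurable
  have htend : Tendsto (fun n => ∫ t, (f t - z n t) ∂μ) atTop
      (nhds (∫ t, h t x ∂μ)) := by
    refine tendsto_integral_of_dominated_convergence (fun _ => C) hmeas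
      (integrable_const C) ?_ ?_
    · intro n
      exact Filter.Eventually.of_forall fun t => by
        simpa [Real.norm_eq_abs] using hbound n t
    · exact Filter.Eventually.of_forall fun t => hlim t
  -- each term dominates ∫ x dν
  have hstep : ∀ n, ∫ t, x t ∂ν ≤ ∫ t, (f t - z n t) ∂μ := by
    intro n
    have hif : Integrable (fun t => f t) μ := f.integrable μ
    have hizμ : Integrable (fun t => z n t) μ := (z n).integrable μ
    have hifν : Integrable (fun t => f t) ν := f.integrable ν
    have hizν : Integrable (fun t => z n t) ν := (z n).integrable ν
    have h1 : ∫ t, (f t - z n t) ∂μ = (∫ t, f t ∂μ) - ∫ t, z n t ∂μ :=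
      integral_sub hif hizμ
    have h2 : ∫ t, (f t - z n t) ∂ν = (∫ t, f t ∂ν) - ∫ t, z n t ∂ν :=
      integral_sub hifν hizν
    have h3 : ∫ t, x t ∂ν ≤ ∫ t, (f t - z n t) ∂ν :=
      integral_mono (x.integrable ν) (hifν.sub hizν) fun t => hxF n t
    have h4 := hmaj (z n) (hzI n).1
    linarith
  exact ge_of_tendsto htend (Filter.Eventually.of_forall hstep)
end

section
/- Let Ω be a Polish space, let K ⊂ C(Ω) be stable under pointwise maxima, let f ∈ C(Ω), and let x ∈ C(Ω) be such that the set S = { f − y : y ∈ K, f − y ≥ x } is nonempty. Define h_ω(x) = inf{ u(ω) : u ∈ S } for ω ∈ Ω. Then there exists a sequence (y_k) in K with f − y_k ≥ x for all k, such that the sequence of functions (f − y_k) is pointwise nonincreasing and converges pointwise on Ω to the function ω ↦ h_ω(x). -/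
open BoundedContinuousFunction Filter

/-- If `K ⊆ C(Ω)` is stable under maxima and the set `{f - y : y ∈ K, f - y ≥ x}` is
nonempty, then there is a sequence `(y_k)` in `K` with `f - y_k ≥ x` such that
`(f - y_k)` is pointwise nonincreasing and converges pointwise to
`ω ↦ h_ω(x) = inf{(f-y)(ω) : y ∈ K, f-y ≥ x}`. -/
theorem stmt_12
    {Ω : Type*} [TopologicalSpace Ω] [PolishSpace Ω]
    (K : Set (Ω →ᵇ ℝ))
    (hKmax : ∀ g₁ ∈ K, ∀ g₂ ∈ K, g₁ ⊔ g₂ ∈ K)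
    (f x : Ω →ᵇ ℝ)
    (hnonempty : ∃ y ∈ K, ∀ t : Ω, x t ≤ f t - y t) :
    ∃ y : ℕ → (Ω →ᵇ ℝ),
      (∀ k, y k ∈ K) ∧
      (∀ k, ∀ t : Ω, x t ≤ f t - y k t) ∧
      (∀ ω : Ω, Antitone fun k => f ω - y k ω) ∧
      (∀ ω : Ω, Tendsto (fun k => f ω - y k ω) atTop
        (nhds (sInf {r : ℝ | ∃ y' ∈ K, (∀ t : Ω, x t ≤ f t - y' t) ∧ r = f ω - y' ω}))) := by
  classical
  set S : Set (Ω →ᵇ ℝ) := {y | y ∈ K ∧ ∀ t, x t ≤ f t - y t} with hSdef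
  obtain ⟨y₀, hy₀K, hy₀x⟩ := hnonempty
  have hy₀S : y₀ ∈ S := ⟨hy₀K, hy₀x⟩
  have hSsup : ∀ a ∈ S, ∀ b ∈ S, a ⊔ b ∈ S := by
    rintro a ⟨haK, hax⟩ b ⟨hbK, hbx⟩
    refine ⟨hKmax a haK b hbK, fun t => ?_⟩
    have : (a ⊔ b) t = max (a t) (b t) := rfl
    rw [this]
    rcases le_total (a t) (b t) with h | h
    · rw [max_eq_right h]; exact hbx t
    · rw [max_eq_left h]; exact hax t
  -- open sets in Ω × ℝ
  have hopen : ∀ y : S, IsOpen {p : Ω × ℝ | f p.1 - (y : Ω →ᵇ ℝ) p.1 < p.2} := by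
    intro y
    exact isOpen_lt (by fun_prop) continuous_snd
  obtain ⟨t, htc, htU⟩ := TopologicalSpace.isOpen_iUnion_countable
    (fun y : S => {p : Ω × ℝ | f p.1 - (y : Ω →ᵇ ℝ) p.1 < p.2}) hopen
  set t' : Set S := insert ⟨y₀, hy₀S⟩ t with ht'def
  have ht'c : t'.Countable := htc.insert _
  obtain ⟨e, he⟩ := ht'c.exists_eq_range ⟨_, Set.mem_insert _ _⟩
  -- the increasing sequence of maxima
  let Y : ℕ → (Ω →ᵇ ℝ) := fun k =>
    Nat.rec ((e 0 : S) : Ω →ᵇ ℝ) (fun n acc => acc ⊔ ((e (n + 1) : S) : Ω →ᵇ ℝ)) k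
  have hY0 : Y 0 = ((e 0 : S) : Ω →ᵇ ℝ) := rfl
  have hYsucc : ∀ n, Y (n + 1) = Y n ⊔ ((e (n + 1) : S) : Ω →ᵇ ℝ) := fun n => rfl
  have hYS : ∀ k, Y k ∈ S := by
    intro k
    induction k with
    | zero => exact (e 0).2
    | succ n ih => rw [hYsucc]; exact hSsup _ ih _ (e (n + 1)).2
  have hYmono : Monotone Y := by
    apply monotone_nat_of_le_succ
    intro n
    rw [hYsucc]
    exact le_sup_left
  have hYge : ∀ n, ((e n : S) : Ω →ᵇ ℝ) ≤ Y n := by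
    intro n
    cases n with
    | zero => exact le_refl _
    | succ m => rw [hYsucc]; exact le_sup_right
  refine ⟨Y, fun k => (hYS k).1, fun k => (hYS k).2, ?_, ?_⟩
  · intro ω j k hjk
    have h : (Y j) ω ≤ (Y k) ω := hYmono hjk ω
    simp only
    linarith
  · intro ω
    set T : Set ℝ := {r : ℝ | ∃ y' ∈ K, (∀ t : Ω, x t ≤ f t - y' t) ∧ r = f ω - y' ω} with hTdef
    have hTne : (f ω - y₀ ω) ∈ T := ⟨y₀, hy₀K, hy₀x, rfl⟩
    have hTbdd : BddBelow T := by
      refine ⟨x ω, ?_⟩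
      rintro r ⟨y', _, hy'x, rfl⟩
      have := hy'x ω
      linarith
    have hmem : ∀ k, (f ω - Y k ω) ∈ T := fun k => ⟨Y k, (hYS k).1, (hYS k).2, rfl⟩
    have hanti : Antitone fun k => f ω - Y k ω := by
      intro j k hjk
      have h : (Y j) ω ≤ (Y k) ω := hYmono hjk ω
      simp only
      linarith
    have hbdd : BddBelow (Set.range fun k => f ω - Y k ω) := by
      refine ⟨x ω, ?_⟩
      rintro r ⟨k, rfl⟩
      have := (hYS k).2 ω
      show x ω ≤ f ω - Y k ω
      linarith
    have htend := tendsto_atTop_ciInf hanti hbdd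
    have heq : (⨅ k, f ω - Y k ω) = sInf T := by
      refine le_antisymm ?_ (le_ciInf fun k => csInf_le hTbdd (hmem k))
      by_contra hlt
      push_neg at hlt
      obtain ⟨r, hrT, hr⟩ := exists_lt_of_csInf_lt ⟨_, hTne⟩ hlt
      obtain ⟨y', hy'K, hy'x, rfl⟩ := hrT
      have hy'S : y' ∈ S := ⟨hy'K, hy'x⟩
      have hpU : (ω, ⨅ k, f ω - Y k ω) ∈
          ⋃ y : S, {p : Ω × ℝ | f p.1 - (y : Ω →ᵇ ℝ) p.1 < p.2} :=
        Set.mem_iUnion.2 ⟨⟨y', hy'S⟩, hr⟩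
      rw [← htU] at hpU
      obtain ⟨ys, hyst, hys⟩ := Set.mem_iUnion₂.1 hpU
      have hyst' : ys ∈ t' := Set.mem_insert_of_mem _ hyst
      rw [he] at hyst'
      obtain ⟨n, rfl⟩ := hyst'
      have h1 : (⨅ k, f ω - Y k ω) ≤ f ω - Y n ω := ciInf_le hbdd n
      have h2 : ((e n : S) : Ω →ᵇ ℝ) ω ≤ Y n ω := hYge n ω
      simp only [Set.mem_setOf_eq] at hys
      linarith
    rw [heq] at htend
    exact htend
end
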